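/- (Summability estimates for the two-step method.) Suppose f is bounded below by f_inf ∈ ℝ, g is Lipschitz with constant L > 0, and H is Lipschitz in operator norm with constant σ > 0. Fix γ, δ, ζ ∈ (0,1], θ > 0, η ∈ [1,∞), α ∈ (0, 2δζ/(Lη²)), and β ∈ (0, 3γ/(σθ)). Let sequences (x_k), (x̂_k), (d_k), (ŝ_k) in E (k ∈ ℕ, k ≥ 1) satisfy for every k: (i) if λ(x_k) ≥ 0 then d_k = 0, and otherwise ⟪d_k, H(x_k) d_k⟫ ≤ γ λ(x_k) ‖d_k‖², ⟪g(x_k), d_k⟫ ≤ 0, and ‖d_k‖ = θ|λ(x_k)|; (ii) x̂_k = x_k + β d_k; (iii) if g(x̂_k) = 0 then ŝ_k = 0, and otherwise −⟪g(x̂_k), ŝ_k⟫ ≥ δ ‖ŝ_k‖ ‖g(x̂_k)‖ and ζ ‖g(x̂_k)‖ ≤ ‖ŝ_k‖ ≤ η ‖g(x̂_k)‖; (iv) x_{k+1} = x̂_k + α ŝ_k. Then the series ∑_{k=1}^∞ |(λ(x_k))₋|³ and ∑_{k=1}^∞ ‖g(x̂_k)‖² both converge (are finite). -/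

import Mathlib

/-!
Both half-steps decrease `f`. By the cubic Taylor bound for a `σ`-Lipschitz Hessian, the
negative-curvature step `β • d k` lowers `f` by `θ²β²(γ/2 - σβθ/6)|λ(x k)|³`, which is positive
exactly because `β < 3γ/(σθ)`. By the descent lemma for an `L`-Lipschitz gradient, the
gradient-related step `α • shat k` lowers `f` by `α(δζ - Lαη²/2)‖∇f(xhat k)‖²`, positive because
`α < 2δζ/(Lη²)`. The decreases telescope, and `f ≥ f_inf` bounds their partial sums.
-/

open scoped RealInnerProductSpace
open Set

theorem le_add_of_hasDerivAt_le_quadratic {φ φ' : ℝ → ℝ} {a b : ℝ}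
    (hφ : ∀ t, HasDerivAt φ (φ' t) t)
    (hle : ∀ t ∈ Icc (0 : ℝ) 1, φ' t ≤ φ' 0 + a * t + b * t ^ 2) :
    φ 1 ≤ φ 0 + φ' 0 + a / 2 + b / 3 := by
  have hB : ∀ t, HasDerivAt (fun t => φ 0 + φ' 0 * t + a / 2 * t ^ 2 + b / 3 * t ^ 3)
      (φ' 0 + a * t + b * t ^ 2) t := fun t => by
    have h := ((((hasDerivAt_id t).const_mul (φ' 0)).add
      ((hasDerivAt_pow 2 t).const_mul (a / 2))).add
      ((hasDerivAt_pow 3 t).const_mul (b / 3))).const_add (φ 0)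
    refine (h.congr_deriv ?_).congr_of_eventuallyEq (.of_forall fun s => ?_)
    · norm_num; ring
    · simp only [Pi.add_apply, id]; ring
  simpa using image_le_of_deriv_right_le_deriv_boundary
    (fun t _ => (hφ t).continuousAt.continuousWithinAt) (fun t _ => (hφ t).hasDerivWithinAt)
    (by simp) (fun t _ => (hB t).continuousAt.continuousWithinAt)
    (fun t _ => (hB t).hasDerivWithinAt) (fun t ht => hle t (Ico_subset_Icc_self ht))
    (right_mem_Icc.2 zero_le_one)

theorem norm_sub_sub_smul_le_of_norm_deriv_sub_le {F : Type*} [NormedAddCommGroup F]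
    [NormedSpace ℝ F] {G G' : ℝ → F} {c : ℝ} (hG : ∀ t, HasDerivAt G (G' t) t)
    (hle : ∀ t ∈ Icc (0 : ℝ) 1, ‖G' t - G' 0‖ ≤ c * t) {t : ℝ} (ht : t ∈ Icc (0 : ℝ) 1) :
    ‖G t - G 0 - t • G' 0‖ ≤ c / 2 * t ^ 2 := by
  have hR : ∀ s, HasDerivAt (fun s => G s - G 0 - s • G' 0) (G' s - G' 0) s := fun s => by
    simpa using ((hG s).sub_const (G 0)).fun_sub ((hasDerivAt_id' s).smul_const (G' 0))
  have hB : ∀ s, HasDerivAt (fun s => c / 2 * s ^ 2) (c * s) s := fun s => by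
    refine ((hasDerivAt_pow 2 s).const_mul (c / 2)).congr_deriv ?_
    norm_num; ring
  exact image_norm_le_of_norm_deriv_right_le_deriv_boundary
    (fun s _ => (hR s).continuousAt.continuousWithinAt) (fun s _ => (hR s).hasDerivWithinAt)
    (by simp) hB (fun s hs => hle s (Ico_subset_Icc_self hs)) ht

section Descent

variable {E : Type*} [NormedAddCommGroup E] [InnerProductSpace ℝ E] [CompleteSpace E]
  {f : E → ℝ}

theorem hasDerivAt_apply_add_smul (hf : Differentiable ℝ f) (x v : E) (t : ℝ) :
    HasDerivAt (fun t : ℝ => f (x + t • v)) ⟪gradient f (x + t • v), v⟫ t := by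
  have hline : HasDerivAt (fun t : ℝ => x + t • v) v t := by
    simpa using ((hasDerivAt_id t).smul_const v).const_add x
  simpa [InnerProductSpace.toDual_apply_apply, Function.comp_def] using
    (hf _).hasGradientAt.hasFDerivAt.comp_hasDerivAt t hline

theorem apply_add_le_of_lipschitz_gradient (hf : Differentiable ℝ f) {L : ℝ}
    (hg : ∀ y z, ‖gradient f y - gradient f z‖ ≤ L * ‖y - z‖) (x v : E) :
    f (x + v) ≤ f x + ⟪gradient f x, v⟫ + L / 2 * ‖v‖ ^ 2 := by
  have key := le_add_of_hasDerivAt_le_quadratic (a := L * ‖v‖ ^ 2) (b := 0)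
    (hasDerivAt_apply_add_smul hf x v) fun t ht => ?_
  · simp only [one_smul, zero_smul, add_zero] at key
    linarith
  · calc ⟪gradient f (x + t • v), v⟫
        = ⟪gradient f x, v⟫ + ⟪gradient f (x + t • v) - gradient f x, v⟫ := by
          rw [inner_sub_left]; ring
      _ ≤ ⟪gradient f x, v⟫ + ‖gradient f (x + t • v) - gradient f x‖ * ‖v‖ := by
          gcongr; exact real_inner_le_norm _ _
      _ ≤ ⟪gradient f x, v⟫ + L * ‖t • v‖ * ‖v‖ := by
          gcongr; simpa using hg (x + t • v) x
      _ = _ := by simp [norm_smul, abs_of_nonneg ht.1]; ring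

theorem apply_add_le_of_lipschitz_hessian (hf : Differentiable ℝ f) {H : E → E →L[ℝ] E}
    (hH : ∀ x, HasFDerivAt (gradient f) (H x) x) {σ : ℝ}
    (hHLip : ∀ y z, ‖H y - H z‖ ≤ σ * ‖y - z‖) (x v : E) :
    f (x + v) ≤ f x + ⟪gradient f x, v⟫ + 1 / 2 * ⟪v, H x v⟫ + σ / 6 * ‖v‖ ^ 3 := by
  have hG : ∀ t : ℝ, HasDerivAt (fun t : ℝ => gradient f (x + t • v)) (H (x + t • v) v) t :=
    fun t => by
      simpa [Function.comp_def] using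
        (hH (x + t • v)).comp_hasDerivAt t (((hasDerivAt_id t).smul_const v).const_add x)
  have hrem : ∀ t ∈ Icc (0 : ℝ) 1,
      ‖gradient f (x + t • v) - gradient f x - t • H x v‖ ≤ σ * ‖v‖ ^ 2 / 2 * t ^ 2 := by
    intro t ht
    have key := norm_sub_sub_smul_le_of_norm_deriv_sub_le hG (c := σ * ‖v‖ ^ 2)
      (fun s hs => ?_) ht
    · simpa using key
    calc ‖H (x + s • v) v - H (x + (0 : ℝ) • v) v‖ = ‖(H (x + s • v) - H x) v‖ := by simp
      _ ≤ ‖H (x + s • v) - H x‖ * ‖v‖ := ContinuousLinearMap.le_opNorm _ _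
      _ ≤ σ * ‖s • v‖ * ‖v‖ := by gcongr; simpa using hHLip (x + s • v) x
      _ = σ * ‖v‖ ^ 2 * s := by simp [norm_smul, abs_of_nonneg hs.1]; ring
  have key := le_add_of_hasDerivAt_le_quadratic (a := ⟪v, H x v⟫) (b := σ * ‖v‖ ^ 3 / 2)
    (hasDerivAt_apply_add_smul hf x v) fun t ht => ?_
  · simp only [one_smul, zero_smul, add_zero] at key
    linarith
  · calc ⟪gradient f (x + t • v), v⟫
        = ⟪gradient f x, v⟫ + ⟪v, H x v⟫ * t
          + ⟪gradient f (x + t • v) - gradient f x - t • H x v, v⟫ := by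
          rw [inner_sub_left, inner_sub_left, real_inner_smul_left, real_inner_comm (H x v)]; ring
      _ ≤ ⟪gradient f x, v⟫ + ⟪v, H x v⟫ * t
          + ‖gradient f (x + t • v) - gradient f x - t • H x v‖ * ‖v‖ := by
          gcongr; exact real_inner_le_norm _ _
      _ ≤ ⟪gradient f x, v⟫ + ⟪v, H x v⟫ * t + σ * ‖v‖ ^ 2 / 2 * t ^ 2 * ‖v‖ := by
          gcongr; exact hrem t ht
      _ = _ := by simp only [zero_smul, add_zero]; ring


theorem apply_add_smul_le_of_negative_curvature (hf : Differentiable ℝ f)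
    {H : E → E →L[ℝ] E} (hH : ∀ x, HasFDerivAt (gradient f) (H x) x) {σ : ℝ}
    (hHLip : ∀ y z, ‖H y - H z‖ ≤ σ * ‖y - z‖) {x d : E} {lam γ θ β : ℝ}
    (hlam : lam ≤ 0) (hβ : 0 ≤ β) (hcurv : ⟪d, H x d⟫ ≤ γ * lam * ‖d‖ ^ 2)
    (hdesc : ⟪gradient f x, d⟫ ≤ 0) (hnorm : ‖d‖ = θ * |lam|) :
    f (x + β • d) ≤ f x - θ ^ 2 * β ^ 2 * (γ / 2 - σ * β * θ / 6) * |lam| ^ 3 := by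
  have h := apply_add_le_of_lipschitz_hessian hf hH hHLip x (β • d)
  rw [real_inner_smul_right, map_smul, real_inner_smul_left, real_inner_smul_right, norm_smul,
    Real.norm_of_nonneg hβ, hnorm] at h
  have hdesc' : β * ⟪gradient f x, d⟫ ≤ 0 := mul_nonpos_of_nonneg_of_nonpos hβ hdesc
  have hcurv' : β * (β * ⟪d, H x d⟫) ≤ β * (β * (γ * lam * (θ * |lam|) ^ 2)) := by
    rw [← hnorm]; gcongr
  have hlam' : lam = -|lam| := by rw [abs_of_nonpos hlam, neg_neg]
  calc f (x + β • d)
      ≤ f x + 1 / 2 * (β * (β * (γ * lam * (θ * |lam|) ^ 2))) + σ / 6 * (β * (θ * |lam|)) ^ 3 := by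
        linarith
    _ = _ := by linear_combination (β ^ 2 * γ * θ ^ 2 * |lam| ^ 2 / 2) * hlam'

theorem apply_add_smul_le_of_gradient_related (hf : Differentiable ℝ f) {L : ℝ} (hL : 0 ≤ L)
    (hg : ∀ y z, ‖gradient f y - gradient f z‖ ≤ L * ‖y - z‖) {x s : E} {α δ ζ η : ℝ}
    (hα : 0 ≤ α) (hδ : 0 ≤ δ) (hangle : δ * ‖s‖ * ‖gradient f x‖ ≤ -⟪gradient f x, s⟫)
    (hlow : ζ * ‖gradient f x‖ ≤ ‖s‖) (hup : ‖s‖ ≤ η * ‖gradient f x‖) :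
    f (x + α • s) ≤ f x - α * (δ * ζ - L * α * η ^ 2 / 2) * ‖gradient f x‖ ^ 2 := by
  have h := apply_add_le_of_lipschitz_gradient hf hg x (α • s)
  rw [real_inner_smul_right, norm_smul, Real.norm_of_nonneg hα] at h
  have hinner : δ * ζ * ‖gradient f x‖ ^ 2 ≤ -⟪gradient f x, s⟫ :=
    calc δ * ζ * ‖gradient f x‖ ^ 2 = δ * (ζ * ‖gradient f x‖) * ‖gradient f x‖ := by ring
      _ ≤ δ * ‖s‖ * ‖gradient f x‖ := by gcongr
      _ ≤ _ := hangle
  have hsq : ‖s‖ ^ 2 ≤ η ^ 2 * ‖gradient f x‖ ^ 2 := by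
    rw [← mul_pow]; exact pow_le_pow_left₀ (norm_nonneg s) hup 2
  have h1 : α * (δ * ζ * ‖gradient f x‖ ^ 2) ≤ α * -⟪gradient f x, s⟫ := by gcongr
  have h2 : L / 2 * α ^ 2 * ‖s‖ ^ 2 ≤ L / 2 * α ^ 2 * (η ^ 2 * ‖gradient f x‖ ^ 2) := by gcongr
  linear_combination h + h1 + h2

end Descent

theorem summable_of_le_sub_succ {u F : ℕ → ℝ} {m : ℝ} (hu : ∀ k, 0 ≤ u k) (hF : ∀ k, m ≤ F k)
    (hdec : ∀ k, u k ≤ F k - F (k + 1)) : Summable u :=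
  summable_of_sum_range_le hu fun N =>
    calc ∑ k ∈ Finset.range N, u k ≤ ∑ k ∈ Finset.range N, (F k - F (k + 1)) :=
          Finset.sum_le_sum fun k _ => hdec k
      _ = F 0 - F N := Finset.sum_range_sub' F N
      _ ≤ F 0 - m := by linarith [hF N]

theorem two_step_method_summability_general
    (n : ℕ)
    (f : EuclideanSpace ℝ (Fin n) → ℝ) (hf : ContDiff ℝ 2 f)
    (f_inf : ℝ) (hfbdd : ∀ y, f_inf ≤ f y)
    (H : EuclideanSpace ℝ (Fin n) → EuclideanSpace ℝ (Fin n) →L[ℝ] EuclideanSpace ℝ (Fin n))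
    (hH : ∀ x, HasFDerivAt (gradient f) (H x) x)
    (lam : EuclideanSpace ℝ (Fin n) → ℝ)
    (L : ℝ) (hL : 0 < L)
    (hgLip : ∀ x y, ‖gradient f x - gradient f y‖ ≤ L * ‖x - y‖)
    (σ : ℝ) (hσ : 0 < σ)
    (hHLip : ∀ x y, ‖H x - H y‖ ≤ σ * ‖x - y‖)
    (γ δ ζ : ℝ) (hδ : δ ∈ Set.Ioc (0 : ℝ) 1)
    (θ : ℝ) (hθ : 0 < θ) (η : ℝ) (hη : 1 ≤ η)
    (α : ℝ) (hα : α ∈ Set.Ioo (0 : ℝ) (2 * δ * ζ / (L * η ^ 2)))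
    (β : ℝ) (hβ : β ∈ Set.Ioo (0 : ℝ) (3 * γ / (σ * θ)))
    (x xhat d shat : ℕ → EuclideanSpace ℝ (Fin n))
    (hd0 : ∀ k, 0 ≤ lam (x k) → d k = 0)
    (hd : ∀ k, lam (x k) < 0 →
      ⟪d k, H (x k) (d k)⟫ ≤ γ * lam (x k) * ‖d k‖ ^ 2 ∧
      ⟪gradient f (x k), d k⟫ ≤ 0 ∧ ‖d k‖ = θ * |lam (x k)|)
    (hxhat : ∀ k, xhat k = x k + β • d k)
    (hs0 : ∀ k, gradient f (xhat k) = 0 → shat k = 0)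
    (hs : ∀ k, gradient f (xhat k) ≠ 0 →
      -⟪gradient f (xhat k), shat k⟫ ≥ δ * ‖shat k‖ * ‖gradient f (xhat k)‖ ∧
      ζ * ‖gradient f (xhat k)‖ ≤ ‖shat k‖ ∧ ‖shat k‖ ≤ η * ‖gradient f (xhat k)‖)
    (hxnext : ∀ k, x (k + 1) = xhat k + α • shat k) :
    Summable (fun k => |min 0 (lam (x k))| ^ 3) ∧
    Summable (fun k => ‖gradient f (xhat k)‖ ^ 2) := by
  obtain ⟨hα0, hα⟩ := hα
  obtain ⟨hβ0, hβ⟩ := hβ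
  have hfd : Differentiable ℝ f := hf.differentiable (by norm_num)
  set c₁ := θ ^ 2 * β ^ 2 * (γ / 2 - σ * β * θ / 6)
  set c₂ := α * (δ * ζ - L * α * η ^ 2 / 2)
  have hc₁ : 0 < c₁ := by
    have := (lt_div_iff₀ (by positivity : 0 < σ * θ)).1 hβ
    have : 0 < γ / 2 - σ * β * θ / 6 := by nlinarith
    positivity
  have hc₂ : 0 < c₂ := by
    have := (lt_div_iff₀ (by positivity : 0 < L * η ^ 2)).1 hα
    have : 0 < δ * ζ - L * α * η ^ 2 / 2 := by nlinarith
    positivity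
  have hneg_step : ∀ k, f (xhat k) ≤ f (x k) - c₁ * |min 0 (lam (x k))| ^ 3 := by
    intro k
    rcases le_or_gt 0 (lam (x k)) with h | h
    · simp [hxhat, hd0 k h, min_eq_left h]
    · obtain ⟨hcurv, hdesc, hnorm⟩ := hd k h
      rw [hxhat, min_eq_right h.le]
      exact apply_add_smul_le_of_negative_curvature hfd hH hHLip h.le hβ0.le hcurv hdesc hnorm
  have hgrad_step : ∀ k, f (x (k + 1)) ≤ f (xhat k) - c₂ * ‖gradient f (xhat k)‖ ^ 2 := by
    intro k
    by_cases h : gradient f (xhat k) = 0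
    · simp [hxnext, hs0 k h, h]
    · obtain ⟨hangle, hlow, hup⟩ := hs k h
      rw [hxnext]
      exact apply_add_smul_le_of_gradient_related hfd hL.le hgLip hα0.le hδ.1.le hangle hlow hup
  have hdec : ∀ k, c₁ * |min 0 (lam (x k))| ^ 3 + c₂ * ‖gradient f (xhat k)‖ ^ 2
      ≤ f (x k) - f (x (k + 1)) := fun k => by linarith [hneg_step k, hgrad_step k]
  constructor
  · refine (summable_mul_left_iff hc₁.ne').1 (summable_of_le_sub_succ (fun k => by positivity)
      (fun k => hfbdd (x k)) fun k => ?_)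
    linarith [hdec k, mul_nonneg hc₂.le (sq_nonneg ‖gradient f (xhat k)‖)]
  · refine (summable_mul_left_iff hc₂.ne').1 (summable_of_le_sub_succ (fun k => by positivity)
      (fun k => hfbdd (x k)) fun k => ?_)
    linarith [hdec k, mul_nonneg hc₁.le (pow_nonneg (abs_nonneg (min 0 (lam (x k)))) 3)]

/-- summability estimates for the two-step method. -/
theorem two_step_method_summability
    (n : ℕ) (hn : 1 ≤ n)
    (f : EuclideanSpace ℝ (Fin n) → ℝ) (hf : ContDiff ℝ 2 f)
    (f_inf : ℝ) (hfbdd : ∀ y, f_inf ≤ f y)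
    (H : EuclideanSpace ℝ (Fin n) → EuclideanSpace ℝ (Fin n) →L[ℝ] EuclideanSpace ℝ (Fin n))
    (hH : ∀ x, HasFDerivAt (gradient f) (H x) x)
    (hHsym : ∀ x u v, ⟪H x u, v⟫ = ⟪u, H x v⟫)
    (lam : EuclideanSpace ℝ (Fin n) → ℝ)
    (hlam : ∀ x, lam x =
      sInf {r : ℝ | ∃ u : EuclideanSpace ℝ (Fin n), ‖u‖ = 1 ∧ r = ⟪u, H x u⟫})
    (L : ℝ) (hL : 0 < L)
    (hgLip : ∀ x y, ‖gradient f x - gradient f y‖ ≤ L * ‖x - y‖)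
    (σ : ℝ) (hσ : 0 < σ)
    (hHLip : ∀ x y, ‖H x - H y‖ ≤ σ * ‖x - y‖)
    (γ δ ζ : ℝ) (hγ : γ ∈ Set.Ioc (0 : ℝ) 1) (hδ : δ ∈ Set.Ioc (0 : ℝ) 1)
    (hζ : ζ ∈ Set.Ioc (0 : ℝ) 1)
    (θ : ℝ) (hθ : 0 < θ) (η : ℝ) (hη : 1 ≤ η)
    (α : ℝ) (hα : α ∈ Set.Ioo (0 : ℝ) (2 * δ * ζ / (L * η ^ 2)))
    (β : ℝ) (hβ : β ∈ Set.Ioo (0 : ℝ) (3 * γ / (σ * θ)))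
    (x xhat d shat : ℕ → EuclideanSpace ℝ (Fin n))
    (hd0 : ∀ k, 0 ≤ lam (x k) → d k = 0)
    (hd : ∀ k, lam (x k) < 0 →
      ⟪d k, H (x k) (d k)⟫ ≤ γ * lam (x k) * ‖d k‖ ^ 2 ∧
      ⟪gradient f (x k), d k⟫ ≤ 0 ∧ ‖d k‖ = θ * |lam (x k)|)
    (hxhat : ∀ k, xhat k = x k + β • d k)
    (hs0 : ∀ k, gradient f (xhat k) = 0 → shat k = 0)
    (hs : ∀ k, gradient f (xhat k) ≠ 0 →
      -⟪gradient f (xhat k), shat k⟫ ≥ δ * ‖shat k‖ * ‖gradient f (xhat k)‖ ∧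
      ζ * ‖gradient f (xhat k)‖ ≤ ‖shat k‖ ∧ ‖shat k‖ ≤ η * ‖gradient f (xhat k)‖)
    (hxnext : ∀ k, x (k + 1) = xhat k + α • shat k) :
    Summable (fun k => |min 0 (lam (x k))| ^ 3) ∧
    Summable (fun k => ‖gradient f (xhat k)‖ ^ 2) :=
  two_step_method_summability_general n f hf f_inf hfbdd H hH lam L hL hgLip σ hσ hHLip γ δ ζ hδ θ
    hθ η hη α hα β hβ x xhat d shat hd0 hd hxhat hs0 hs hxnext
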